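/- For every x ∈ (0, π/2) and every integer m ≥ 2, |(sin x / x)² + (tan x)/x - (2 + (1/cos x)·Σ_{k=2}^{m} (-1)^{k} D(k) x^{2k})| < D(m+1) x^{2m+2} / cos x. -/

import Mathlib

/-!
Multiplying by `x² cos x` and using `cos 3x = 4 cos³ x - 3 cos x` turns
`(sin x / x)² + tan x / x - 2` into `(cos x - cos 3x) / 4 + x sin x - 2 x² cos x`, whose Taylor
series is `∑ (-1)^k D(k) x^(2k+2)`; the terms with `k = 0, 1` vanish, so the error is the tail
of this series from `k = m + 1` on, divided by `x² cos x`. For `|x| < 2` and `k ≥ 3` the terms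
decrease strictly: the numerator of `D` grows at most twelvefold per step while the factorial
gains `(2k+3)(2k+4) ≥ 90`. An alternating series with decreasing terms lies between `0` and its
first term, strictly below it once the second and third terms differ.
-/

open Real Finset

/-- The coefficient `D(k) = (3^(2k+2) - 32k² - 40k - 9) / (4·(2k+2)!)`. -/
noncomputable def wchD (k : ℕ) : ℝ :=
  ((3 : ℝ) ^ (2 * k + 2) - 32 * (k : ℝ) ^ 2 - 40 * (k : ℝ) - 9) /
    (4 * (Nat.factorial (2 * k + 2) : ℝ))

open Nat

open Filter Topology in
theorem alternating_series_mem_Ico {g : ℕ → ℝ} {l : ℝ}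
    (hl : Tendsto (fun n ↦ ∑ i ∈ range n, (-1) ^ i * g i) atTop (𝓝 l))
    (hg : Antitone g) (h21 : g 2 < g 1) : l ∈ Set.Ico 0 (g 0) := by
  have lower := hg.alternating_series_le_tendsto hl 1
  have upper := hg.tendsto_le_alternating_series hl 1
  simp only [Nat.reduceMul, Nat.reduceAdd, sum_range_succ, sum_range_zero, zero_add, pow_zero,
    pow_one, neg_one_sq, one_mul, neg_one_mul] at lower upper
  constructor
  · linarith [hg (Nat.zero_le 1)]
  · linarith

noncomputable def wchDNum (k : ℕ) : ℝ :=
  (3 : ℝ) ^ (2 * k + 2) - 32 * (k : ℝ) ^ 2 - 40 * (k : ℝ) - 9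

theorem wchD_eq_wchDNum_div (k : ℕ) :
    wchD k = wchDNum k / (4 * (Nat.factorial (2 * k + 2) : ℝ)) := rfl

theorem wchDNum_succ (k : ℕ) :
    wchDNum (k + 1) = 9 * wchDNum k + 256 * k * (k + 1) := by
  simp only [wchDNum]
  push_cast
  ring

theorem mul_succ_le_wchDNum {k : ℕ} (hk : 2 ≤ k) : 256 * k * (k + 1) ≤ 3 * wchDNum k := by
  induction k, hk using Nat.le_induction with
  | base => norm_num [wchDNum]
  | succ k hk ih =>
    have hk' : (2 : ℝ) ≤ k := by exact_mod_cast hk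
    rw [wchDNum_succ]
    push_cast
    nlinarith

theorem wchDNum_pos {k : ℕ} (hk : 2 ≤ k) : 0 < wchDNum k := by
  have hk' : (2 : ℝ) ≤ k := by exact_mod_cast hk
  nlinarith [mul_succ_le_wchDNum hk]

theorem wchD_succ_mul_sq_lt {k : ℕ} (hk : 3 ≤ k) {x : ℝ} (hx : |x| < 2) :
    wchD (k + 1) * x ^ 2 < wchD k := by
  have hk' : (3 : ℝ) ≤ k := by exact_mod_cast hk
  have hN := wchDNum_pos (k := k) (by omega)
  have hNsucc : wchDNum (k + 1) ≤ 12 * wchDNum k := by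
    linarith [wchDNum_succ k, mul_succ_le_wchDNum (k := k) (by omega)]
  have hx2 : x ^ 2 < 4 := by nlinarith [sq_abs x, abs_nonneg x]
  have hfac : ((2 * (k + 1) + 2).factorial : ℝ)
      = (2 * k + 4) * (2 * k + 3) * (2 * k + 2).factorial := by
    rw [show 2 * (k + 1) + 2 = 2 * k + 2 + 1 + 1 by ring, Nat.factorial_succ,
      Nat.factorial_succ]
    push_cast
    ring
  rw [wchD_eq_wchDNum_div, wchD_eq_wchDNum_div, hfac, div_mul_eq_mul_div,
    div_lt_div_iff₀ (by positivity) (by positivity)]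
  have hnum : wchDNum (k + 1) * x ^ 2 < (2 * k + 4) * (2 * k + 3) * wchDNum k := by
    have h90 : (90 : ℝ) ≤ (2 * k + 4) * (2 * k + 3) := by nlinarith
    nlinarith [mul_le_mul_of_nonneg_right hNsucc (sq_nonneg x), mul_lt_mul_of_pos_left hx2 hN,
      mul_le_mul_of_nonneg_right h90 hN.le]
  nlinarith [mul_lt_mul_of_pos_right hnum (by positivity : (0 : ℝ) < 4 * (2 * k + 2).factorial)]

theorem wchD_zero : wchD 0 = 0 := by norm_num [wchD]

theorem wchD_one : wchD 1 = 0 := by norm_num [wchD]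

theorem wchD_term_eq (x : ℝ) (k : ℕ) :
    (-1) ^ k * wchD k * x ^ (2 * k + 2) =
      ((-1) ^ (k + 1) * x ^ (2 * (k + 1)) / (2 * (k + 1))!
          - (-1) ^ (k + 1) * (3 * x) ^ (2 * (k + 1)) / (2 * (k + 1))!) / 4
        + x * ((-1) ^ k * x ^ (2 * k + 1) / (2 * k + 1)!)
        - 2 * x ^ 2 * ((-1) ^ k * x ^ (2 * k) / (2 * k)!) := by
  have h1 : ((2 * k + 1)! : ℝ) = (2 * k + 1) * (2 * k)! := by
    push_cast [Nat.factorial_succ]; ring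
  have h2 : ((2 * k + 2)! : ℝ) = (2 * k + 2) * ((2 * k + 1) * (2 * k)!) := by
    push_cast [Nat.factorial_succ]; ring
  rw [show 2 * (k + 1) = 2 * k + 2 by ring, wchD, h1, h2]
  field_simp
  ring

theorem hasSum_wchD (x : ℝ) :
    HasSum (fun k ↦ (-1) ^ k * wchD k * x ^ (2 * k + 2))
      (cos x * sin x ^ 2 + x * sin x - 2 * x ^ 2 * cos x) := by
  have hcos := ((hasSum_cos x).sub (hasSum_cos (3 * x))).div_const 4
  rw [← hasSum_nat_add_iff' 1] at hcos
  have := (hcos.add ((hasSum_sin x).mul_left x)).sub ((hasSum_cos x).mul_left (2 * x ^ 2))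
  have hval : cos x * sin x ^ 2 = (cos x - cos (3 * x)) / 4 - ∑ i ∈ range 1,
      ((-1) ^ i * x ^ (2 * i) / (2 * i)! - (-1) ^ i * (3 * x) ^ (2 * i) / (2 * i)!) / 4 := by
    rw [cos_three_mul, sin_sq]
    simp only [sum_range_one, mul_zero, pow_zero, sub_self, zero_div, sub_zero]
    ring
  simp only [wchD_term_eq, hval]
  exact this

theorem sum_range_wchD_term {m : ℕ} (hm : 1 ≤ m) (x : ℝ) :
    ∑ k ∈ range (m + 1), (-1) ^ k * wchD k * x ^ (2 * k + 2) =
      x ^ 2 * ∑ k ∈ Icc 2 m, (-1) ^ k * wchD k * x ^ (2 * k) := by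
  rw [← sum_range_add_sum_Ico _ (by omega : 2 ≤ m + 1), Ico_add_one_right_eq_Icc, mul_sum]
  simp only [sum_range_succ, sum_range_zero, wchD_zero, wchD_one, mul_zero, zero_mul, zero_add]
  exact sum_congr rfl fun k _ ↦ by ring

theorem abs_tail_wchD_lt {x : ℝ} (hx0 : x ≠ 0) (hx : |x| < 2) {n : ℕ} (hn : 3 ≤ n) {T : ℝ}
    (hT : HasSum (fun i ↦ (-1) ^ (i + n) * wchD (i + n) * x ^ (2 * (i + n) + 2)) T) :
    |T| < wchD n * x ^ (2 * n + 2) := by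
  set g : ℕ → ℝ := fun i ↦ wchD (i + n) * x ^ (2 * (i + n) + 2)
  have hg : StrictAnti g := strictAnti_nat_of_succ_lt fun i ↦ by
    have hpos : 0 < x ^ (2 * (i + n) + 2) := Even.pow_pos ⟨i + n + 1, by ring⟩ hx0
    calc g (i + 1) = wchD (i + n + 1) * x ^ 2 * x ^ (2 * (i + n) + 2) := by
          simp only [g, show i + 1 + n = i + n + 1 by ring]; ring
      _ < g i := mul_lt_mul_of_pos_right (wchD_succ_mul_sq_lt (by omega) hx) hpos
  have hsign : ((-1 : ℝ) ^ n) ^ 2 = 1 := by rw [← pow_mul, mul_comm, pow_mul]; simp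
  have halt : HasSum (fun i ↦ (-1) ^ i * g i) ((-1) ^ n * T) :=
    (hT.mul_left _).congr_fun fun i ↦ by linear_combination (-(-1) ^ i * g i) * hsign
  obtain ⟨hlo, hhi⟩ := alternating_series_mem_Ico halt.tendsto_sum_nat hg.antitone (hg one_lt_two)
  rw [← abs_of_nonneg hlo, abs_mul, abs_pow, abs_neg, abs_one, one_pow, one_mul] at hhi
  simpa [g] using hhi

theorem sinx_div_x_sq_add_tanx_div_x_error :
    ∀ x ∈ Set.Ioo (0 : ℝ) (π / 2), ∀ m : ℕ, 2 ≤ m →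
      |(Real.sin x / x) ^ 2 + Real.tan x / x
          - (2 + (1 / Real.cos x) *
              ∑ k ∈ Finset.Icc 2 m, (-1 : ℝ) ^ k * wchD k * x ^ (2 * k))|
        < wchD (m + 1) * x ^ (2 * m + 2) / Real.cos x := by
  rintro x ⟨hx0, hxπ⟩ m hm
  have hcos : 0 < cos x := cos_pos_of_mem_Ioo ⟨by linarith [pi_pos], hxπ⟩
  have hx2 : |x| < 2 := by rw [abs_of_pos hx0]; linarith [pi_lt_d2]
  set S := ∑ k ∈ Icc 2 m, (-1 : ℝ) ^ k * wchD k * x ^ (2 * k)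
  have hsum := (hasSum_nat_add_iff' (m + 1)).2 (hasSum_wchD x)
  have htail := abs_tail_wchD_lt hx0.ne' hx2 (n := m + 1) (by omega) hsum
  rw [sum_range_wchD_term (by omega)] at htail
  have hrem : (sin x / x) ^ 2 + tan x / x - (2 + 1 / cos x * S) =
      (cos x * sin x ^ 2 + x * sin x - 2 * x ^ 2 * cos x - x ^ 2 * S) / (x ^ 2 * cos x) := by
    rw [tan_eq_sin_div_cos]
    field_simp
    ring
  rw [hrem, abs_div, abs_of_pos (by positivity : 0 < x ^ 2 * cos x),
    div_lt_div_iff₀ (by positivity) hcos]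
  calc |_| * cos x < wchD (m + 1) * x ^ (2 * (m + 1) + 2) * cos x :=
        mul_lt_mul_of_pos_right htail hcos
    _ = wchD (m + 1) * x ^ (2 * m + 2) * (x ^ 2 * cos x) := by ring
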